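/- arXiv:2309.11618 — 5 statements merged into one kernel-verified Lean document; each statement's English description precedes it below -/
import Mathlib

section
/- Let n ≥ 6 and let β = (β_1,…,β_d) be a partition of n all of whose parts satisfy β_i ≥ 3. Then every complex zero of the polynomial G(x) = Σ_{S ⊆ {1,…,d}} (−1)^{d−|S|} binom(x−2+β_S, n−2) has real part 1/2. -/
open Polynomial
open scoped Classical

/-- The cycle type of a permutation of `Fin n` as a partition of `n`,
including fixed points as parts equal to `1`. -/
noncomputable def fullCycleType {n : ℕ} (σ : Equiv.Perm (Fin n)) : Multiset ℕ :=
  σ.cycleType + Multiset.replicate (n - σ.cycleType.sum) 1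

/-- The number of disjoint cycles of a permutation, fixed points included. -/
noncomputable def numCycles {n : ℕ} (σ : Equiv.Perm (Fin n)) : ℕ :=
  Multiset.card (fullCycleType σ)

/-- The set (conjugacy class) of permutations of `Fin n` with full cycle type `β`. -/
noncomputable def permClass (n : ℕ) (β : Multiset ℕ) : Finset (Equiv.Perm (Fin n)) :=
  Finset.univ.filter (fun ω => fullCycleType ω = β)

/-- The polynomial `P_{[2,n-2],β}(x) = (n(n-1)/|C_β|) ⬝ Σ_{ρ(ω)=β} x^{κ(αω)}`. -/
noncomputable def Pperm {n : ℕ} (α : Equiv.Perm (Fin n)) (β : Multiset ℕ) : Polynomial ℚ :=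
  Polynomial.C (((n : ℚ) * ((n : ℚ) - 1)) / ((permClass n β).card : ℚ)) *
    ∑ ω ∈ permClass n β, Polynomial.X ^ (numCycles (α * ω))

/-- The polynomial `binom(x + c, k)` in `x`: for `k ≥ 0` it is
`(x+c)(x+c-1)⋯(x+c-k+1)/k!`, and it is `0` for `k < 0`. -/
noncomputable def binomPoly (c k : ℤ) : Polynomial ℚ :=
  if 0 ≤ k then
    (((k.toNat).factorial : ℚ))⁻¹ •
      ((descPochhammer ℚ k.toNat).comp (Polynomial.X + Polynomial.C (c : ℚ)))
  else 0

/-- The signless Stirling number of the first kind: the number of permutations of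
an `N`-element set with exactly `m` cycles (fixed points included). -/
noncomputable def stirling1 (N m : ℕ) : ℕ :=
  (Finset.univ.filter (fun σ : Equiv.Perm (Fin N) => numCycles σ = m)).card

/-- For a Young diagram with row lengths `L` (rows and columns 0-indexed),
the product `∏_{u} (t + c(u))` over the cells `u`, `c(u)` being the content. -/
def contentProd (L : List ℕ) (t : ℤ) : ℤ :=
  ∏ i ∈ Finset.range L.length, ∏ j ∈ Finset.range (L.getD i 0), (t + (j : ℤ) - (i : ℤ))

/-- `C(a, b)` for an integer `b`: the usual binomial coefficient when `b ≥ 0`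
(which is `0` for `b > a`), and `0` when `b < 0`. -/
def chooseZ (a : ℕ) (b : ℤ) : ℚ := if 0 ≤ b then (a.choose b.toNat : ℚ) else 0

/-!
Let `E = taylor 1` be the shift `p(x) ↦ p(x + 1)`. Then `G = q(E) B` with
`q(t) = ∏ᵢ (t^{βᵢ} - 1)` and `B(x) = binom(x - 2, n - 2) = (x - 2)(x - 3)⋯(x - n + 1) / (n - 2)!`,
and `q` has `n` roots `ζ`, all of modulus one. Apply the factors `E - ζ` one at a time. If
`P = (x - 2)⋯(x - j - 2) · S` with all zeros of `S` on the line `Re x = τ`, then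
`(E - ζ) P = (x - 2)⋯(x - j - 1) · S'` with `S'(x) = (x - 1) S(x + 1) - ζ (x - j - 2) S(x)`, and
once no real factor is left, `S'(x) = S(x + 1) - ζ S(x)`. In both cases the two terms of `S'` are
`c ∏ (x - a*)` and `c ζ ∏ (x - a)`, where every `a` lies right of the line `Re x = τ - 1/2` and
`a*` is its mirror image in that line; at a point off the line every factor `|x - a|` is smaller
than `|x - a*|`, or every one is larger, so the zeros of `S'` lie on `Re x = τ - 1/2`. Starting
from `Re x = (n + 1)/2`, the `n` steps end on `Re x = 1/2`, and `G ≠ 0` because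
`G(2) = binom(n, n - 2)`.
-/

noncomputable def lineReflect (σ : ℝ) (a : ℂ) : ℂ := ⟨2 * σ - a.re, a.im⟩

lemma norm_sub_lt_norm_sub_lineReflect {σ : ℝ} {a z : ℂ} (ha : σ < a.re) (hz : σ < z.re) :
    ‖z - a‖ < ‖z - lineReflect σ a‖ := by
  rw [Complex.norm_def, Complex.norm_def]
  refine Real.sqrt_lt_sqrt (Complex.normSq_nonneg _) ?_
  simp only [Complex.normSq_apply, Complex.sub_re, Complex.sub_im, lineReflect]
  nlinarith [mul_pos (sub_pos.2 ha) (sub_pos.2 hz)]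

lemma norm_sub_lineReflect_lt_norm_sub {σ : ℝ} {a z : ℂ} (ha : σ < a.re) (hz : z.re < σ) :
    ‖z - lineReflect σ a‖ < ‖z - a‖ := by
  rw [Complex.norm_def, Complex.norm_def]
  refine Real.sqrt_lt_sqrt (Complex.normSq_nonneg _) ?_
  simp only [Complex.normSq_apply, Complex.sub_re, Complex.sub_im, lineReflect]
  nlinarith [mul_pos (sub_pos.2 ha) (sub_pos.2 hz)]

lemma Multiset.prod_map_lt_prod_map_of_nonneg {ι R : Type*} [CommSemiring R] [PartialOrder R]
    [IsStrictOrderedRing R] {s : Multiset ι} (hs : s ≠ 0) {f g : ι → R}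
    (h0 : ∀ i ∈ s, 0 ≤ f i) (h : ∀ i ∈ s, f i < g i) :
    (s.map f).prod < (s.map g).prod := by
  induction s using Multiset.induction_on with
  | empty => exact absurd rfl hs
  | cons a s ih =>
    simp only [Multiset.map_cons, Multiset.prod_cons]
    rcases eq_or_ne s 0 with rfl | hs'
    · simpa using h a (Multiset.mem_cons_self a 0)
    refine mul_lt_mul'' (h a (Multiset.mem_cons_self a s))
      (ih hs' (fun i hi => h0 i (Multiset.mem_cons_of_mem hi))
        (fun i hi => h i (Multiset.mem_cons_of_mem hi)))
      (h0 a (Multiset.mem_cons_self a s))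
      (Multiset.prod_map_nonneg fun i hi => h0 i (Multiset.mem_cons_of_mem hi))

lemma eval_prod_map_X_sub_C {ι R : Type*} [CommRing R] (s : Multiset ι) (f : ι → R) (z : R) :
    ((s.map fun a => X - C (f a)).prod).eval z = (s.map fun a => z - f a).prod := by
  rw [eval_multiset_prod, Multiset.map_map]
  simp

lemma norm_prod_map {ι α : Type*} [NormedField α] (s : Multiset ι) (f : ι → α) :
    ‖(s.map f).prod‖ = (s.map fun a => ‖f a‖).prod := by
  simpa [Multiset.map_map, Function.comp_def] using map_multiset_prod (normHom : α →*₀ ℝ) (s.map f)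

lemma re_eq_of_mem_roots_prod_sub {σ : ℝ} {s : Multiset ℂ} (hs : ∀ a ∈ s, σ < a.re) {ζ z : ℂ}
    (hζ : ‖ζ‖ = 1)
    (hz : z ∈ ((s.map fun a => X - C (lineReflect σ a)).prod
      - C ζ * (s.map fun a => X - C a).prod).roots) :
    z.re = σ := by
  rcases eq_or_ne s 0 with rfl | hs0
  · simp only [Multiset.map_zero, Multiset.prod_zero, mul_one] at hz
    rw [← C_1, ← C_sub, roots_C] at hz
    simp at hz
  have hnorm : (s.map fun a => ‖z - lineReflect σ a‖).prod = (s.map fun a => ‖z - a‖).prod := by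
    have := (mem_roots'.1 hz).2
    rw [IsRoot, eval_sub, eval_mul, eval_C, eval_prod_map_X_sub_C, sub_eq_zero] at this
    rw [← norm_prod_map, ← norm_prod_map, this, norm_mul, hζ, one_mul]
    exact congrArg _ (eval_prod_map_X_sub_C s id z)
  rcases lt_trichotomy z.re σ with h | h | h
  · refine absurd hnorm (ne_of_lt ?_)
    exact Multiset.prod_map_lt_prod_map_of_nonneg hs0 (fun _ _ => norm_nonneg _)
      fun a ha => norm_sub_lineReflect_lt_norm_sub (hs a ha) h
  · exact h
  · refine absurd hnorm (ne_of_gt ?_)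
    exact Multiset.prod_map_lt_prod_map_of_nonneg hs0 (fun _ _ => norm_nonneg _)
      fun a ha => norm_sub_lt_norm_sub_lineReflect (hs a ha) h

lemma lineReflect_eq_sub_one {σ : ℝ} {r : ℂ} (hr : r.re = σ + 1 / 2) :
    lineReflect σ r = r - 1 := by
  apply Complex.ext <;> simp [lineReflect, hr]; ring

lemma taylor_one_eq_prod_lineReflect {σ : ℝ} {S : ℂ[X]}
    (hS : ∀ r ∈ S.roots, r.re = σ + 1 / 2) :
    taylor 1 S = C S.leadingCoeff * (S.roots.map fun r => X - C (lineReflect σ r)).prod := by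
  conv_lhs => rw [← C_leadingCoeff_mul_prod_multiset_X_sub_C (p := S)
    IsAlgClosed.card_roots_eq_natDegree]
  rw [taylor_mul, taylor_C, taylor_apply, multiset_prod_comp, Multiset.map_map]
  congr 2
  refine Multiset.map_congr rfl fun r hr => ?_
  simp only [Function.comp_apply, sub_comp, X_comp, C_comp, lineReflect_eq_sub_one (hS r hr),
    C_sub, C_1]
  ring

lemma re_eq_of_mem_roots_taylor_sub {σ : ℝ} {S : ℂ[X]} (hS : ∀ r ∈ S.roots, r.re = σ + 1 / 2)
    {t : Multiset ℂ} (ht : ∀ a ∈ t, σ < a.re) {ζ z : ℂ} (hζ : ‖ζ‖ = 1)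
    (hz : z ∈ ((t.map fun a => X - C (lineReflect σ a)).prod * taylor 1 S
      - C ζ * ((t.map fun a => X - C a).prod * S)).roots) :
    z.re = σ := by
  rcases eq_or_ne S 0 with rfl | hS0
  · simp at hz
  have hlc : S.leadingCoeff ≠ 0 := leadingCoeff_ne_zero.2 hS0
  have hsplit := C_leadingCoeff_mul_prod_multiset_X_sub_C (p := S)
    IsAlgClosed.card_roots_eq_natDegree
  have hfactor : (t.map fun a => X - C (lineReflect σ a)).prod * taylor 1 S
      - C ζ * ((t.map fun a => X - C a).prod * S)
      = C S.leadingCoeff * (((t + S.roots).map fun a => X - C (lineReflect σ a)).prod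
        - C ζ * ((t + S.roots).map fun a => X - C a).prod) := by
    rw [taylor_one_eq_prod_lineReflect hS]
    simp only [Multiset.map_add, Multiset.prod_add]
    linear_combination (C ζ * (t.map fun a => X - C a).prod) * hsplit
  rw [hfactor, roots_C_mul _ hlc] at hz
  refine re_eq_of_mem_roots_prod_sub (fun a ha => ?_) hζ hz
  rcases Multiset.mem_add.1 ha with ha | ha
  · exact ht a ha
  · linarith [hS a ha]

noncomputable def descPochhammerSubTwo (j : ℕ) : ℂ[X] := taylor (-2) (descPochhammer ℂ j)

lemma descPochhammerSubTwo_zero : descPochhammerSubTwo 0 = 1 := by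
  simp [descPochhammerSubTwo]

lemma descPochhammerSubTwo_succ (j : ℕ) :
    descPochhammerSubTwo (j + 1) = descPochhammerSubTwo j * (X - C ((j : ℂ) + 2)) := by
  rw [descPochhammerSubTwo, descPochhammerSubTwo, descPochhammer_succ_right, taylor_mul]
  simp only [map_sub, taylor_X, ← C_eq_natCast, taylor_C, C_add, C_neg]
  ring

lemma taylor_one_descPochhammerSubTwo_succ (j : ℕ) :
    taylor 1 (descPochhammerSubTwo (j + 1)) = (X - C 1) * descPochhammerSubTwo j := by
  rw [descPochhammerSubTwo, descPochhammerSubTwo, taylor_taylor, descPochhammer_succ_left,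
    taylor_mul, taylor_X, taylor_apply, taylor_apply, comp_assoc]
  have h : (1 : ℂ) + -2 = -1 := by norm_num
  simp only [h, sub_comp, X_comp, one_comp, C_neg, C_1]
  rw [show (C 2 : ℂ[X]) = 1 + 1 by rw [← C_1, ← C_add]; norm_num]
  ring_nf

lemma aeval_taylor_one_X_sub_C_mul (ζ : ℂ) (p P : ℂ[X]) :
    aeval (taylor (1 : ℂ)) ((X - C ζ) * p) P
      = taylor 1 (aeval (taylor (1 : ℂ)) p P) - C ζ * aeval (taylor (1 : ℂ)) p P := by
  rw [map_mul, Module.End.mul_apply, map_sub, aeval_X, aeval_C, LinearMap.sub_apply,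
    Module.algebraMap_end_apply, smul_eq_C_mul]

lemma exists_taylor_one_sub_eq_descPochhammerSubTwo_mul {k c : ℕ} {S : ℂ[X]}
    (hS : ∀ r ∈ S.roots, r.re = ((k : ℝ) + 3 - c) / 2) {ζ : ℂ} (hζ : ‖ζ‖ = 1) :
    ∃ S' : ℂ[X], (∀ r ∈ S'.roots, r.re = ((k : ℝ) + 3 - (c + 1 : ℕ)) / 2) ∧
      taylor 1 (descPochhammerSubTwo (k - c) * S) - C ζ * (descPochhammerSubTwo (k - c) * S)
        = descPochhammerSubTwo (k - (c + 1)) * S' := by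
  have hS' : ∀ r ∈ S.roots, r.re = ((k : ℝ) + 3 - (c + 1 : ℕ)) / 2 + 1 / 2 := fun r hr => by
    rw [hS r hr]; push_cast; ring
  set σ : ℝ := ((k : ℝ) + 3 - (c + 1 : ℕ)) / 2
  -- `k - c` truncates: the real factor is used up after `k` steps, and then `k - c` stays `0`.
  rcases hkc : k - c with _ | j
  · refine ⟨taylor 1 S - C ζ * S, fun z hz => ?_, ?_⟩
    · exact re_eq_of_mem_roots_taylor_sub hS' (t := 0) (by simp) hζ (by simpa using hz)
    · rw [show k - (c + 1) = 0 by omega]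
      simp [descPochhammerSubTwo_zero]
  · have hσ : σ = ((j : ℝ) + 3) / 2 := by
      have : (k : ℝ) = c + j + 1 := by exact_mod_cast (by omega : k = c + j + 1)
      simp only [σ, this]; push_cast; ring
    refine ⟨(X - C 1) * taylor 1 S - C ζ * ((X - C ((j : ℂ) + 2)) * S), fun z hz => ?_, ?_⟩
    · have hreflect : lineReflect σ ((j : ℂ) + 2) = 1 :=
        Complex.ext (by simp [lineReflect, hσ]; ring) (by simp [lineReflect])
      refine re_eq_of_mem_roots_taylor_sub hS' (t := {(j : ℂ) + 2}) ?_ hζ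
        (by simpa [hreflect] using hz)
      simp only [Multiset.mem_singleton, forall_eq, Complex.add_re, Complex.natCast_re, hσ]
      norm_num
      linarith
    · rw [show k - (c + 1) = j by omega, taylor_mul, taylor_one_descPochhammerSubTwo_succ,
        descPochhammerSubTwo_succ]
      ring

lemma exists_aeval_taylor_one_prod_X_sub_C_eq (k : ℕ) {S₀ : ℂ[X]}
    (h₀ : ∀ r ∈ S₀.roots, r.re = ((k : ℝ) + 3) / 2) {s : Multiset ℂ} (hs : ∀ ζ ∈ s, ‖ζ‖ = 1) :
    ∃ S : ℂ[X], (∀ r ∈ S.roots, r.re = ((k : ℝ) + 3 - Multiset.card s) / 2) ∧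
      aeval (taylor (1 : ℂ)) (s.map fun ζ => X - C ζ).prod (descPochhammerSubTwo k * S₀)
        = descPochhammerSubTwo (k - Multiset.card s) * S := by
  induction s using Multiset.induction_on with
  | empty => exact ⟨S₀, by simpa using h₀, by simp⟩
  | cons ζ s ih =>
    obtain ⟨S, hS, heq⟩ := ih fun ζ' h => hs ζ' (Multiset.mem_cons_of_mem h)
    obtain ⟨S', hS', heq'⟩ := exists_taylor_one_sub_eq_descPochhammerSubTwo_mul hS
      (hs ζ (Multiset.mem_cons_self ζ s))
    refine ⟨S', by simpa using hS', ?_⟩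
    rw [Multiset.map_cons, Multiset.prod_cons, aeval_taylor_one_X_sub_C_mul, heq, heq',
      Multiset.card_cons]

lemma binomPoly_add (c m k : ℤ) : binomPoly (c + m) k = taylor (m : ℚ) (binomPoly c k) := by
  unfold binomPoly
  split_ifs
  · rw [map_smul, taylor_apply, comp_assoc, add_comp, X_comp, C_comp, add_assoc, ← C_add]
    push_cast
    rw [add_comm (m : ℚ)]
  · simp

lemma aeval_taylor_one_X_pow {R : Type*} [CommRing R] (m : ℕ) :
    aeval (taylor (1 : R)) ((X : R[X]) ^ m) = taylor (m : R) := by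
  induction m with
  | zero => simp only [pow_zero, map_one, Nat.cast_zero, taylor_zero']; rfl
  | succ m ih =>
    refine LinearMap.ext fun f => ?_
    rw [pow_succ, map_mul, ih, aeval_X, Module.End.mul_apply, taylor_taylor]
    push_cast
    rfl

lemma Finset.prod_pow_sub_one {R : Type*} [CommRing R] {d : ℕ} (x : R) (β : Fin d → ℕ) :
    ∏ i, (x ^ β i - 1) = ∑ S : Finset (Fin d), (-1) ^ (d - S.card) * x ^ (∑ i ∈ S, β i) := by
  simp_rw [sub_eq_add_neg, Finset.prod_add, Finset.powerset_univ, Finset.prod_pow_eq_pow_sum,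
    Finset.prod_const, Finset.card_sdiff_of_subset (Finset.subset_univ _), Finset.card_univ,
    Fintype.card_fin, mul_comm]

lemma map_sum_binomPoly_eq_aeval_taylor {d : ℕ} (β : Fin d → ℕ) (c k : ℤ) :
    (∑ S : Finset (Fin d), ((-1 : ℚ) ^ (d - S.card)) • binomPoly ((∑ i ∈ S, β i : ℤ) + c) k).map
        (algebraMap ℚ ℂ)
      = aeval (taylor (1 : ℂ)) (∏ i, ((X : ℂ[X]) ^ β i - 1))
          ((binomPoly c k).map (algebraMap ℚ ℂ)) := by
  rw [Finset.prod_pow_sub_one, map_sum, LinearMap.sum_apply, Polynomial.map_sum]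
  refine Finset.sum_congr rfl fun S _ => ?_
  rw [show ((-1 : ℂ[X]) ^ (d - S.card)) = C ((-1) ^ (d - S.card)) by simp, map_mul, aeval_C,
    aeval_taylor_one_X_pow, Module.End.mul_apply, Module.algebraMap_end_apply, add_comm,
    binomPoly_add, Polynomial.map_smul, map_taylor]
  simp

lemma map_binomPoly_neg_two (k : ℕ) :
    (binomPoly (-2) k).map (algebraMap ℚ ℂ) = descPochhammerSubTwo k * C ((k.factorial : ℂ)⁻¹) := by
  rw [binomPoly, if_pos (Int.natCast_nonneg k), Int.toNat_natCast, smul_eq_C_mul,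
    Polynomial.map_mul, map_C, Polynomial.map_comp, descPochhammer_map, mul_comm,
    descPochhammerSubTwo, taylor_apply]
  simp

section prodXPowSubOne

variable {d : ℕ} {β : Fin d → ℕ}

lemma monic_prod_X_pow_sub_one (hβ : ∀ i, β i ≠ 0) : (∏ i, ((X : ℂ[X]) ^ β i - 1)).Monic :=
  monic_prod_of_monic _ _ fun i _ => by
    simpa using monic_X_pow_sub_C (1 : ℂ) (hβ i)

lemma natDegree_prod_X_pow_sub_one (hβ : ∀ i, β i ≠ 0) :
    (∏ i, ((X : ℂ[X]) ^ β i - 1)).natDegree = ∑ i, β i := by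
  rw [natDegree_prod_of_monic _ _ fun i _ => by simpa using monic_X_pow_sub_C (1 : ℂ) (hβ i)]
  exact Finset.sum_congr rfl fun i _ => by
    simpa using natDegree_X_pow_sub_C (n := β i) (r := (1 : ℂ))

lemma norm_eq_one_of_mem_roots_prod_X_pow_sub_one (hβ : ∀ i, β i ≠ 0) {ζ : ℂ}
    (hζ : ζ ∈ (∏ i, ((X : ℂ[X]) ^ β i - 1)).roots) : ‖ζ‖ = 1 := by
  have := (mem_roots'.1 hζ).2
  rw [IsRoot, eval_prod, Finset.prod_eq_zero_iff] at this
  obtain ⟨i, -, hi⟩ := this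
  simp only [eval_sub, eval_pow, eval_X, eval_one, sub_eq_zero] at hi
  exact Complex.norm_eq_one_of_pow_eq_one hi (hβ i)

lemma exists_norm_eq_one_prod_X_sub_C_eq_prod_X_pow_sub_one (hβ : ∀ i, β i ≠ 0) :
    ∃ s : Multiset ℂ, (∀ ζ ∈ s, ‖ζ‖ = 1) ∧ Multiset.card s = ∑ i, β i ∧
      (s.map fun ζ => X - C ζ).prod = ∏ i, ((X : ℂ[X]) ^ β i - 1) :=
  ⟨_, fun _ => norm_eq_one_of_mem_roots_prod_X_pow_sub_one hβ,
    by rw [IsAlgClosed.card_roots_eq_natDegree, natDegree_prod_X_pow_sub_one hβ],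
    prod_multiset_X_sub_C_of_monic_of_roots_card_eq (monic_prod_X_pow_sub_one hβ)
      IsAlgClosed.card_roots_eq_natDegree⟩

end prodXPowSubOne

lemma eval_two_binomPoly (m k : ℕ) : (binomPoly ((m : ℤ) - 2) k).eval 2 = (m.choose k : ℚ) := by
  rw [binomPoly, if_pos (Int.natCast_nonneg k), Int.toNat_natCast, eval_smul, eval_comp,
    eval_add, eval_X, eval_C, show (2 : ℚ) + ((m : ℤ) - 2 : ℤ) = m by push_cast; ring,
    descPochhammer_eval_eq_descFactorial, Nat.descFactorial_eq_factorial_mul_choose, smul_eq_mul]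
  push_cast
  field_simp

lemma eval_two_sum_binomPoly_ne_zero {n d : ℕ} (hn : 2 ≤ n) (β : Fin d → ℕ)
    (hβ3 : ∀ i, 3 ≤ β i) (hsum : ∑ i, β i = n) :
    (∑ S : Finset (Fin d), ((-1 : ℚ) ^ (d - S.card)) •
      binomPoly ((∑ i ∈ S, β i : ℤ) - 2) ((n : ℤ) - 2)).eval 2 ≠ 0 := by
  have hk : (n : ℤ) - 2 = ((n - 2 : ℕ) : ℤ) := by omega
  simp_rw [hk, eval_finsetSum, eval_smul, ← Nat.cast_sum, eval_two_binomPoly, smul_eq_mul]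
  rw [Finset.sum_eq_single_of_mem Finset.univ (Finset.mem_univ _)]
  · simp [hsum, Nat.choose_eq_zero_iff]
  · intro S _ hS
    obtain ⟨i, hi⟩ : ∃ i, i ∉ S := by simpa [Finset.eq_univ_iff_forall] using hS
    have : β i + ∑ j ∈ S, β j ≤ n := by
      rw [← Finset.sum_insert hi, ← hsum]
      exact Finset.sum_le_sum_of_subset (Finset.subset_univ _)
    rw [Nat.choose_eq_zero_of_lt (by linarith [hβ3 i]), Nat.cast_zero, mul_zero]

/-- every complex zero of
`G(x) = Σ_{S ⊆ [d]} (−1)^{d−|S|} binom(x−2+β_S, n−2)` has real part `1/2`. -/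
theorem G_half_real_part_zeros (n d : ℕ) (hn : 6 ≤ n) (β : Fin d → ℕ)
    (hβ3 : ∀ i, 3 ≤ β i) (hsum : ∑ i, β i = n) :
    ∀ z : ℂ,
      Polynomial.aeval z
          (∑ S : Finset (Fin d), ((-1 : ℚ) ^ (d - S.card)) •
            binomPoly ((∑ i ∈ S, β i : ℤ) - 2) ((n : ℤ) - 2)) = 0 →
        z.re = 1 / 2 := by
  intro z hz
  have hG2 := eval_two_sum_binomPoly_ne_zero (by omega) β hβ3 hsum
  set G := ∑ S : Finset (Fin d), ((-1 : ℚ) ^ (d - S.card)) •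
    binomPoly ((∑ i ∈ S, β i : ℤ) - 2) ((n : ℤ) - 2)
  obtain ⟨s, hs, hcard, hq⟩ :=
    exists_norm_eq_one_prod_X_sub_C_eq_prod_X_pow_sub_one (β := β) fun i => by linarith [hβ3 i]
  have hG : G.map (algebraMap ℚ ℂ) = aeval (taylor (1 : ℂ)) (s.map fun ζ => X - C ζ).prod
      (descPochhammerSubTwo (n - 2) * C (((n - 2).factorial : ℂ)⁻¹)) := by
    rw [hq, ← map_binomPoly_neg_two, ← map_sum_binomPoly_eq_aeval_taylor,
      show (((n - 2 : ℕ) : ℤ)) = (n : ℤ) - 2 by omega]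
    simp only [G, sub_eq_add_neg]
  obtain ⟨S, hS, hGS⟩ := exists_aeval_taylor_one_prod_X_sub_C_eq (n - 2)
    (S₀ := C (((n - 2).factorial : ℂ)⁻¹)) (by simp) hs
  rw [hcard, hsum, show n - 2 - n = 0 by omega, descPochhammerSubTwo_zero, one_mul, ← hG] at hGS
  have hGne : G.map (algebraMap ℚ ℂ) ≠ 0 :=
    (Polynomial.map_ne_zero_iff (algebraMap ℚ ℂ).injective).2 fun h => hG2 (by rw [h, eval_zero])
  have hzS : z ∈ S.roots := by
    rw [← hGS]
    exact mem_roots'.2 ⟨hGne, by rwa [IsRoot, eval_map_algebraMap]⟩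
  rw [hS z hzS, hcard, hsum, Nat.cast_sub (by omega : 2 ≤ n)]
  ring
end

section
/- Let k ≥ 0 be an integer, let b_1,…,b_k be real numbers, and let h(x) = x(x−1)·∏_{j=1}^k (x − 1/2 − i·b_j), where i is the imaginary unit. Then every complex zero of the polynomial h(x) + h(x+1) has real part 0. -/
open Polynomial
open scoped Classical

/-! Put `d = (1, 1/2 + i b_1, …, 1/2 + i b_k)`, all of positive real part. Since `1 - d_i = conj d_i`,
`h(z) + h(z+1) = z (∏ (z - d_i) + ∏ (z + conj d_i))`. As `|z + conj d|² - |z - d|² = 4 Re z Re d`,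
off the imaginary axis each factor of one product is strictly shorter than the matching factor
of the other, so the two products cannot cancel. -/

open ComplexConjugate

theorem Finset.prod_lt_prod_of_nonempty_of_nonneg {ι R : Type*} [CommMonoidWithZero R]
    [PartialOrder R] [ZeroLEOneClass R] [PosMulStrictMono R] [Nontrivial R] {f g : ι → R}
    {s : Finset ι} (hf : ∀ i ∈ s, 0 ≤ f i) (hfg : ∀ i ∈ s, f i < g i) (hs : s.Nonempty) :
    ∏ i ∈ s, f i < ∏ i ∈ s, g i := by
  have hg : 0 < ∏ i ∈ s, g i := prod_pos fun i hi => (hf i hi).trans_lt (hfg i hi)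
  by_cases hf0 : ∃ i ∈ s, f i = 0
  · obtain ⟨i, hi, hfi⟩ := hf0
    rwa [prod_eq_zero hi hfi]
  · push Not at hf0
    exact prod_lt_prod_of_nonempty (fun i hi => (hf i hi).lt_of_ne' (hf0 i hi)) hfg hs

namespace Complex

theorem normSq_add_conj (z d : ℂ) : normSq (z + conj d) = normSq (z - d) + 4 * z.re * d.re := by
  simp only [normSq_apply, add_re, add_im, sub_re, sub_im, conj_re, conj_im]
  ring

theorem norm_sub_lt_norm_add_conj {z d : ℂ} (hz : 0 < z.re) (hd : 0 < d.re) :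
    ‖z - d‖ < ‖z + conj d‖ := by
  refine lt_of_pow_lt_pow_left₀ 2 (norm_nonneg _) ?_
  rw [Complex.sq_norm, Complex.sq_norm, normSq_add_conj]
  nlinarith

theorem norm_add_conj_lt_norm_sub {z d : ℂ} (hz : z.re < 0) (hd : 0 < d.re) :
    ‖z + conj d‖ < ‖z - d‖ := by
  refine lt_of_pow_lt_pow_left₀ 2 (norm_nonneg _) ?_
  rw [Complex.sq_norm, Complex.sq_norm, normSq_add_conj]
  nlinarith

theorem prod_sub_add_prod_add_conj_ne_zero {ι : Type*} {s : Finset ι} (hs : s.Nonempty)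
    {d : ι → ℂ} (hd : ∀ i ∈ s, 0 < (d i).re) {z : ℂ} (hz : z.re ≠ 0) :
    ∏ i ∈ s, (z - d i) + ∏ i ∈ s, (z + conj (d i)) ≠ 0 := by
  intro hsum
  have hnorm : ∏ i ∈ s, ‖z - d i‖ = ∏ i ∈ s, ‖z + conj (d i)‖ := by
    rw [← norm_prod, ← norm_prod, eq_neg_of_add_eq_zero_left hsum, norm_neg]
  rcases hz.lt_or_gt with hneg | hpos
  · exact (Finset.prod_lt_prod_of_nonempty_of_nonneg (fun _ _ => norm_nonneg _)
      (fun i hi => norm_add_conj_lt_norm_sub hneg (hd i hi)) hs).ne' hnorm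
  · exact (Finset.prod_lt_prod_of_nonempty_of_nonneg (fun _ _ => norm_nonneg _)
      (fun i hi => norm_sub_lt_norm_add_conj hpos (hd i hi)) hs).ne hnorm

end Complex

/-- if `h(x) = x(x−1)∏_j (x − 1/2 − i b_j)` with `b_j` real, then every
zero of `h(x) + h(x+1)` is purely imaginary. -/
theorem sum_shift_imaginary_zeros (k : ℕ) (b : Fin k → ℝ) (h : Polynomial ℂ)
    (hh : h = Polynomial.X * (Polynomial.X - 1) *
      ∏ j : Fin k, (Polynomial.X - Polynomial.C ((1 / 2 : ℂ) + (b j : ℂ) * Complex.I))) :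
    ∀ z : ℂ, (h + h.comp (Polynomial.X + 1)).eval z = 0 → z.re = 0 := by
  intro z hz
  by_contra hre
  let d : Fin (k + 1) → ℂ := Fin.cons 1 fun j => 1 / 2 + (b j : ℂ) * Complex.I
  have hd : ∀ i ∈ Finset.univ, 0 < (d i).re := by
    intro i _
    cases i using Fin.cases <;> norm_num [d]
  have heval : (h + h.comp (X + 1)).eval z
      = z * (∏ i, (z - d i) + ∏ i, (z + conj (d i))) := by
    have hconj : ∀ j : Fin k, z + 1 - (1 / 2 + (b j : ℂ) * Complex.I)
        = z + conj (1 / 2 + (b j : ℂ) * Complex.I) := by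
      intro j
      apply Complex.ext <;> norm_num <;> ring
    simp only [hh, eval_add, eval_comp, eval_mul, eval_prod, eval_sub, eval_X, eval_one, eval_C,
      Fin.prod_univ_succ, d, Fin.cons_zero, Fin.cons_succ, hconj, map_one]
    ring
  rw [heval, mul_eq_zero] at hz
  rcases hz with hz0 | hsum
  · exact hre (by rw [hz0, Complex.zero_re])
  · exact Complex.prod_sub_add_prod_add_conj_ne_zero Finset.univ_nonempty hd hre hsum
end

section
/- Let n ≥ 6 and 0 ≤ j ≤ n−6, and let λ = [1^j, 3, n−j−3] be the partition of n with one part n−j−3, one part 3, and j parts equal to 1. Then for every integer m with 0 ≤ m ≤ n, (1/n!) · Σ_{d=0}^{m} (−1)^d C(m,d) ∏_{u∈λ} (m−d+c(u)) = (m(m−1)/(n(n−1))) · C(n−j−2, n−m) + (2m/(n(n−1))) · C(n−j−3, n−m−1), where the product runs over the cells u of the Young diagram of λ. (By the hook length formula, the left-hand side equals 𝔠_{λ,m}/f^λ, where 𝔠_{λ,m} = Σ_{d=0}^m (−1)^d C(m,d) ∏_{u∈λ}(m−d+c(u))/h(u) and f^λ is the number of standard Young tableaux of shape λ.) -/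
open Polynomial
open scoped Classical

lemma absorbQ (u k : ℕ) : ((u:ℚ) - k) * (u.choose k : ℚ) = ((k:ℚ)+1) * (u.choose (k+1) : ℚ) := by
  rcases lt_or_ge u (k+1) with h | h
  · rw [Nat.choose_eq_zero_of_lt h]
    rcases lt_or_ge u k with h2 | h2
    · rw [Nat.choose_eq_zero_of_lt h2]; ring
    · have : u = k := by omega
      subst this; simp
  · have h1 := Nat.choose_succ_right_eq u k
    have h2 : ((u - k : ℕ) : ℚ) = (u:ℚ) - k := by
      push_cast [Nat.cast_sub (by omega : k ≤ u)]; ring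
    have := congrArg (fun x : ℕ => (x : ℚ)) h1
    push_cast at this
    rw [h2] at this
    linarith [this]

lemma prodDesc (u : ℕ) : ∀ k : ℕ, (∏ i ∈ Finset.range k, ((u:ℚ) - i)) = (k.factorial : ℚ) * (u.choose k : ℚ)
  | 0 => by simp
  | k+1 => by
    rw [Finset.prod_range_succ, prodDesc u k, Nat.factorial_succ]
    push_cast
    have := absorbQ u k
    nlinarith [this]

lemma pascalZ (a : ℕ) (r : ℤ) : chooseZ (a+1) r = chooseZ a r + chooseZ a (r-1) := by
  unfold chooseZ
  rcases lt_or_ge r 0 with h | h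
  · rw [if_neg (by omega), if_neg (by omega), if_neg (by omega)]; ring
  rcases eq_or_lt_of_le h with h0 | h1
  · rw [if_pos h, if_pos h, if_neg (by omega), ← h0]; simp
  · rw [if_pos h, if_pos h, if_pos (by omega)]
    have ht : r.toNat = (r-1).toNat + 1 := by omega
    rw [ht, Nat.choose_succ_succ]
    push_cast; ring

lemma absorbZ (a : ℕ) (r : ℤ) : ((a:ℚ) - ((r:ℚ)-1)) * chooseZ a (r-1) = (r:ℚ) * chooseZ a r := by
  unfold chooseZ
  rcases lt_or_ge r 0 with h | h
  · rw [if_neg (by omega), if_neg (by omega)]; ring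
  rcases eq_or_lt_of_le h with h0 | h1
  · rw [if_pos h, if_neg (by omega), ← h0]; simp
  · rw [if_pos h, if_pos (by omega)]
    have ht : r.toNat = (r-1).toNat + 1 := by omega
    have hc : ((r-1).toNat : ℚ) = (r:ℚ) - 1 := by
      have : (((r-1).toNat : ℤ) : ℚ) = ((r-1 : ℤ) : ℚ) := by rw [Int.toNat_of_nonneg (by omega)]
      push_cast at this ⊢; linarith
    rw [ht]
    have := absorbQ a (r-1).toNat
    rw [hc] at this
    rw [show ((r:ℚ)-1+1) = (r:ℚ) by ring] at this
    exact this

lemma sumA (N : ℕ) : ∀ m : ℕ, ∀ c : ℕ,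
    (∑ d ∈ Finset.range (m+1), (-1:ℚ)^d * (m.choose d : ℚ) * ((m - d + c).choose N : ℚ))
      = chooseZ c ((N:ℤ) - m)
  | 0 => by
    intro c
    simp [chooseZ]
  | (m+1) => by
    intro c
    have IH1 := sumA N m c
    have IH2 := sumA N m (c+1)
    rw [Finset.sum_range_succ']
    have hterm : ∀ d ∈ Finset.range (m+1),
        (-1:ℚ)^(d+1) * ((m+1).choose (d+1) : ℚ) * ((m+1 - (d+1) + c).choose N : ℚ)
          = -((-1:ℚ)^d * (m.choose d : ℚ) * ((m - d + c).choose N : ℚ))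
            + -((-1:ℚ)^d * (m.choose (d+1) : ℚ) * ((m - d + c).choose N : ℚ)) := by
      intro d hd
      have h1 : m + 1 - (d+1) = m - d := by omega
      rw [h1, Nat.choose_succ_succ]
      push_cast; ring
    rw [Finset.sum_congr rfl hterm, Finset.sum_add_distrib]
    have hg : (∑ d ∈ Finset.range (m+1),
        -((-1:ℚ)^d * (m.choose (d+1) : ℚ) * ((m - d + c).choose N : ℚ)))
        = chooseZ (c+1) ((N:ℤ) - m) - ((m+1+c).choose N : ℚ) := by
      have h2 := Finset.sum_range_succ'
        (fun e => (-1:ℚ)^e * (m.choose e : ℚ) * ((m+1-e+c).choose N : ℚ)) (m+1)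
      have h3 : (∑ e ∈ Finset.range (m+2),
          (-1:ℚ)^e * (m.choose e : ℚ) * ((m+1-e+c).choose N : ℚ))
          = chooseZ (c+1) ((N:ℤ) - m) := by
        rw [Finset.sum_range_succ]
        have hz : (m.choose (m+1) : ℚ) = 0 := by
          rw [Nat.choose_eq_zero_of_lt (by omega)]; simp
        rw [hz]
        have hcong : ∀ e ∈ Finset.range (m+1),
            (-1:ℚ)^e * (m.choose e : ℚ) * ((m+1-e+c).choose N : ℚ)
            = (-1:ℚ)^e * (m.choose e : ℚ) * ((m - e + (c+1)).choose N : ℚ) := by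
          intro e he
          simp only [Finset.mem_range] at he
          have : m + 1 - e + c = m - e + (c+1) := by omega
          rw [this]
        rw [Finset.sum_congr rfl hcong, IH2]
        ring
      have h4 : ∀ d ∈ Finset.range (m+1),
          ((-1:ℚ)^(d+1) * (m.choose (d+1) : ℚ) * ((m+1-(d+1)+c).choose N : ℚ))
          = -((-1:ℚ)^d * (m.choose (d+1) : ℚ) * ((m - d + c).choose N : ℚ)) := by
        intro d hd
        have : m + 1 - (d+1) = m - d := by omega
        rw [this]; ring
      have h5 : (∑ d ∈ Finset.range (m+1),
          -((-1:ℚ)^d * (m.choose (d+1) : ℚ) * ((m - d + c).choose N : ℚ)))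
          = ∑ d ∈ Finset.range (m+1),
            ((-1:ℚ)^(d+1) * (m.choose (d+1) : ℚ) * ((m+1-(d+1)+c).choose N : ℚ)) :=
        Finset.sum_congr rfl (fun d hd => (h4 d hd).symm)
      rw [h5]
      beta_reduce at h2
      rw [h3] at h2
      norm_num at h2
      linarith [h2]
    rw [hg]
    have hs1 : (∑ d ∈ Finset.range (m+1),
        -((-1:ℚ)^d * (m.choose d : ℚ) * ((m - d + c).choose N : ℚ)))
        = -(∑ d ∈ Finset.range (m+1),
            ((-1:ℚ)^d * (m.choose d : ℚ) * ((m - d + c).choose N : ℚ))) := by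
      rw [← Finset.sum_neg_distrib]
    rw [hs1, IH1]
    have hp := pascalZ c ((N:ℤ) - m)
    have harg : (N:ℤ) - (m+1 : ℕ) = (N:ℤ) - m - 1 := by push_cast; ring
    rw [harg]
    norm_num
    linarith [hp]

lemma wheel (a j u : ℕ) :
    ((u:ℚ) - ((a:ℚ)+2)) * ((u:ℚ) - ((a:ℚ)+1)) * (u.choose (a+j+4) : ℚ)
    = ((a:ℚ)+(j:ℚ)+6)*((a:ℚ)+(j:ℚ)+5) * (u.choose (a+j+6) : ℚ)
      + 2*((a:ℚ)+(j:ℚ)+5)*((j:ℚ)+3) * (u.choose (a+j+5) : ℚ)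
      + ((j:ℚ)+2)*((j:ℚ)+3) * (u.choose (a+j+4) : ℚ) := by
  have r1 := absorbQ u (a+j+4)
  have r2 := absorbQ u (a+j+5)
  rw [show a+j+4+1 = a+j+5 from by omega] at r1
  rw [show a+j+5+1 = a+j+6 from by omega] at r2
  push_cast at r1 r2
  linear_combination ((u:ℚ) - ((a:ℚ)+(j:ℚ)+4) + 2*(j:ℚ) + 5) * r1 + ((a:ℚ)+(j:ℚ)+5) * r2

lemma contentProd_eq (a j : ℕ) (t : ℤ) :
    contentProd ((a+3) :: 3 :: List.replicate j 1) t
      = t * (t+1) * ∏ i ∈ Finset.range (a+j+4), (t + (a:ℤ) + 2 - (i:ℤ)) := by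
  have hl : ((a+3) :: 3 :: List.replicate j 1).length = j + 2 := by simp
  rw [contentProd, hl]
  rw [Finset.prod_range_succ' _ (j+1), Finset.prod_range_succ' _ j]
  -- f 0
  have hf0 : ∏ jj ∈ Finset.range (((a+3) :: 3 :: List.replicate j 1).getD 0 0),
      (t + (jj:ℤ) - ((0:ℕ):ℤ)) = ∏ jj ∈ Finset.range (a+3), (t + (jj:ℤ)) := by
    simp
  have hf1 : ∏ jj ∈ Finset.range (((a+3) :: 3 :: List.replicate j 1).getD (0+1) 0),
      (t + (jj:ℤ) - ((0+1:ℕ):ℤ)) = (t-1) * t * (t+1) := by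
    have hg : ((a+3) :: 3 :: List.replicate j 1).getD (0+1) 0 = 3 := rfl
    rw [hg, Finset.prod_range_succ, Finset.prod_range_succ, Finset.prod_range_succ,
      Finset.prod_range_zero]
    push_cast; ring
  have hfi : ∀ i ∈ Finset.range j,
      (∏ jj ∈ Finset.range (((a+3) :: 3 :: List.replicate j 1).getD (i+1+1) 0),
        (t + (jj:ℤ) - ((i+1+1:ℕ):ℤ))) = (t - 2 - (i:ℤ)) := by
    intro i hi
    simp only [Finset.mem_range] at hi
    have hg : ((a+3) :: 3 :: List.replicate j 1).getD (i+1+1) 0 = 1 := by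
      simp only [List.getD_cons_succ]
      rw [List.getD_eq_getElem _ _ (by simpa using hi)]
      simp
    rw [hg, Finset.prod_range_succ, Finset.prod_range_zero]
    push_cast
    ring
  rw [show a+j+4 = (a+3) + (j+1) from by omega, Finset.prod_range_add]
  rw [Finset.prod_congr rfl hfi, hf1, hf0]
  have hA : ∏ i ∈ Finset.range (a+3), (t + (a:ℤ) + 2 - (i:ℤ)) =
      ∏ jj ∈ Finset.range (a+3), (t + (jj:ℤ)) := by
    have := Finset.prod_range_reflect (fun i => t + (i:ℤ)) (a+3)
    rw [← this]
    refine Finset.prod_congr rfl ?_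
    intro i hi
    simp only [Finset.mem_range] at hi
    have : a + 3 - 1 - i = a + 2 - i := by omega
    rw [this]
    rw [Nat.cast_sub (by omega : i ≤ a + 2)]
    push_cast; ring
  have hB : ∏ i ∈ Finset.range (j+1), (t + (a:ℤ) + 2 - ((a+3+i : ℕ):ℤ)) =
      (t - 1) * ∏ i ∈ Finset.range j, (t - 2 - (i:ℤ)) := by
    rw [Finset.prod_range_succ' _ j]
    have : ∀ i ∈ Finset.range j,
        (t + (a:ℤ) + 2 - ((a+3+(i+1) : ℕ):ℤ)) = (t - 2 - (i:ℤ)) := by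
      intro i hi; push_cast; ring
    rw [Finset.prod_congr rfl this]
    push_cast
    ring
  rw [hA, hB]
  ring

lemma finalId (a j m : ℕ) (s : ℤ) (hm : (m:ℚ) = ((a:ℚ)+(j:ℚ)+6) - ((s:ℚ))) :
    ((a:ℚ)+(j:ℚ)+6)*((a:ℚ)+(j:ℚ)+5) * chooseZ (a+2) s
      + 2*((a:ℚ)+(j:ℚ)+5)*((j:ℚ)+3) * chooseZ (a+2) (s-1)
      + ((j:ℚ)+2)*((j:ℚ)+3) * chooseZ (a+2) (s-2)
    = (m:ℚ)*((m:ℚ)-1) * chooseZ (a+4) s + 2*(m:ℚ) * chooseZ (a+3) (s-1) := by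
  have p1 := pascalZ (a+3) s
  have p2 := pascalZ (a+2) s
  have p3 := pascalZ (a+2) (s-1)
  rw [show a+3+1 = a+4 from by omega] at p1
  rw [show a+2+1 = a+3 from by omega] at p2 p3
  rw [show s-1-1 = s-2 from by ring] at p3
  have r1 := absorbZ (a+2) s
  have r2 := absorbZ (a+2) (s-1)
  rw [show s-1-1 = s-2 from by ring] at r2
  push_cast at r1 r2
  rw [hm, p1, p2, p3]
  linear_combination ((s:ℚ) + 1 - 2*((a:ℚ)+(j:ℚ)+6)) * r1 + ((s:ℚ) - ((a:ℚ)+2*(j:ℚ)+9)) * r2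

lemma cancelF (A F S : ℚ) (hF : F ≠ 0) : (A*F)⁻¹ * (F*S) = A⁻¹ * S := by
  rw [mul_inv, mul_assoc, inv_mul_cancel_left₀ hF]

/-- the normalized character sum for `λ = [1^j, 3, n−j−3]` equals
`(m(m−1)/(n(n−1)))·C(n−j−2, n−m) + (2m/(n(n−1)))·C(n−j−3, n−m−1)`. -/
theorem content_sum_hook3 (n j m : ℕ) (hn : 6 ≤ n) (hj : j ≤ n - 6) (hm : m ≤ n) :
    ((n.factorial : ℚ))⁻¹ *
      ∑ d ∈ Finset.range (m + 1), (-1 : ℚ) ^ d * (m.choose d : ℚ) *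
        ((contentProd ((n - j - 3) :: 3 :: List.replicate j 1) ((m : ℤ) - (d : ℤ))) : ℚ) =
    ((m : ℚ) * ((m : ℚ) - 1) / ((n : ℚ) * ((n : ℚ) - 1))) * chooseZ (n - j - 2) ((n : ℤ) - m)
      + (2 * (m : ℚ) / ((n : ℚ) * ((n : ℚ) - 1))) * chooseZ (n - j - 3) ((n : ℤ) - m - 1) := by
  obtain ⟨a, rfl⟩ : ∃ a, n = a + j + 6 := ⟨n - j - 6, by omega⟩
  rw [show a + j + 6 - j - 3 = a + 3 from by omega,
      show a + j + 6 - j - 2 = a + 4 from by omega]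
  -- per-term rewrite
  have hterm : ∀ d ∈ Finset.range (m+1),
      (-1 : ℚ) ^ d * (m.choose d : ℚ) *
        ((contentProd ((a+3) :: 3 :: List.replicate j 1) ((m : ℤ) - (d : ℤ))) : ℚ)
      = ((a+j+4).factorial : ℚ) *
          ( ((a:ℚ)+(j:ℚ)+6)*((a:ℚ)+(j:ℚ)+5) *
              ((-1:ℚ)^d * (m.choose d : ℚ) * (((m - d + (a+2)).choose (a+j+6) : ℕ) : ℚ))
            + 2*((a:ℚ)+(j:ℚ)+5)*((j:ℚ)+3) *
              ((-1:ℚ)^d * (m.choose d : ℚ) * (((m - d + (a+2)).choose (a+j+5) : ℕ) : ℚ))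
            + ((j:ℚ)+2)*((j:ℚ)+3) *
              ((-1:ℚ)^d * (m.choose d : ℚ) * (((m - d + (a+2)).choose (a+j+4) : ℕ) : ℚ)) ) := by
    intro d hd
    simp only [Finset.mem_range] at hd
    have hdm : d ≤ m := by omega
    rw [contentProd_eq]
    have hP' : (∏ i ∈ Finset.range (a+j+4), ((m:ℚ) - (d:ℚ) + (a:ℚ) + 2 - (i:ℚ)))
        = ((a+j+4).factorial : ℚ) * (((m - d + (a+2)).choose (a+j+4) : ℕ) : ℚ) := by
      rw [← prodDesc]
      refine Finset.prod_congr rfl fun i hi => ?_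
      push_cast [Nat.cast_sub hdm]
      ring
    have hu : ((m - d + (a+2) : ℕ) : ℚ) = (m:ℚ) - (d:ℚ) + (a:ℚ) + 2 := by
      push_cast [Nat.cast_sub hdm]; ring
    have hw := wheel a j (m - d + (a+2))
    rw [hu] at hw
    push_cast
    rw [hP']
    linear_combination (((a+j+4).factorial : ℚ) * ((-1:ℚ)^d * (m.choose d : ℚ))) * hw
  rw [Finset.sum_congr rfl hterm]
  -- pull out constants and apply sumA
  rw [← Finset.mul_sum, Finset.sum_add_distrib, Finset.sum_add_distrib,
      ← Finset.mul_sum, ← Finset.mul_sum, ← Finset.mul_sum,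
      sumA (a+j+6) m (a+2), sumA (a+j+5) m (a+2), sumA (a+j+4) m (a+2)]
  rw [show ((a+j+5 : ℕ) : ℤ) - (m:ℤ) = ((a+j+6 : ℕ) : ℤ) - (m:ℤ) - 1 from by push_cast; ring,
      show ((a+j+4 : ℕ) : ℤ) - (m:ℤ) = ((a+j+6 : ℕ) : ℤ) - (m:ℤ) - 2 from by push_cast; ring]
  have hfin := finalId a j m (((a+j+6 : ℕ) : ℤ) - (m:ℤ)) (by push_cast; ring)
  have hfact : ((a+j+6).factorial : ℚ)
      = ((a:ℚ)+(j:ℚ)+6) * ((a:ℚ)+(j:ℚ)+5) * ((a+j+4).factorial : ℚ) := by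
    rw [show a+j+6 = (a+j+5)+1 from by omega, Nat.factorial_succ,
        show a+j+5 = (a+j+4)+1 from by omega, Nat.factorial_succ]
    push_cast; ring
  have h1 : ((a:ℚ)+(j:ℚ)+6) ≠ 0 := by positivity
  have h2 : ((a:ℚ)+(j:ℚ)+5) ≠ 0 := by positivity
  have h3 : ((a+j+4).factorial : ℚ) ≠ 0 := by positivity
  have hn6 : ((a+j+6 : ℕ) : ℚ) = (a:ℚ)+(j:ℚ)+6 := by push_cast; ring
  rw [hfact, hn6]
  rw [cancelF _ _ _ h3]
  rw [show ((a:ℚ)+(j:ℚ)+6) * (((a:ℚ)+(j:ℚ)+6) - 1)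
      = ((a:ℚ)+(j:ℚ)+6) * ((a:ℚ)+(j:ℚ)+5) from by ring]
  rw [div_eq_mul_inv, div_eq_mul_inv]
  linear_combination ((((a:ℚ)+(j:ℚ)+6) * ((a:ℚ)+(j:ℚ)+5))⁻¹) * hfin
end

section
/- Let n ≥ 3 and let m be an integer with 0 ≤ m ≤ n. Define F(λ) = (1/n!) · Σ_{d=0}^{m} (−1)^d C(m,d) ∏_{u∈λ} (m−d+c(u)), where the product runs over the cells of the Young diagram of the partition λ of n. Then: F([n]) = C(n−1, m−1); F([1^n]) = 1 if m = n and 0 if m < n; F([1^{n−2}, 2]) = C(1, n−m); and F([1, n−1]) = C(n−2, n−m). -/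
open Polynomial
open scoped Classical

lemma keyA : ∀ m : ℕ, ∀ n c : ℕ, m ≤ n →
    ∑ d ∈ Finset.range (m + 1), (-1 : ℚ) ^ d * (m.choose d : ℚ) * ((c + m - d).choose n : ℚ)
      = (c.choose (n - m) : ℚ) := by
  intro m
  induction m with
  | zero => simp
  | succ m ih =>
    intro n c h
    have hm : m ≤ n := by omega
    -- T lemma
    have hT : ∑ d ∈ Finset.range (m + 1),
        (-1 : ℚ) ^ d * (m.choose (d+1) : ℚ) * ((c + m - d).choose n : ℚ)
        = ((c + m + 1).choose n : ℚ) - ((c+1).choose (n - m) : ℚ) := by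
      have h1 := ih n (c+1) hm
      rw [Finset.sum_range_succ'] at h1
      have h2 : ∀ d ∈ Finset.range m,
          (-1 : ℚ) ^ (d+1) * (m.choose (d+1) : ℚ) * ((c + 1 + m - (d+1)).choose n : ℚ)
          = -((-1 : ℚ) ^ d * (m.choose (d+1) : ℚ) * ((c + m - d).choose n : ℚ)) := by
        intro d _
        have : c + 1 + m - (d+1) = c + m - d := by omega
        rw [this, pow_succ]; ring
      rw [Finset.sum_congr rfl h2, Finset.sum_neg_distrib] at h1
      rw [Finset.sum_range_succ, Nat.choose_succ_self]
      push_cast at h1 ⊢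
      have : c + 1 + m = c + m + 1 := by omega
      rw [this] at h1
      simp only [pow_zero, Nat.choose_zero_right, Nat.cast_one, one_mul, mul_one,
        Nat.sub_zero, mul_zero, zero_mul, add_zero, Nat.cast_ofNat,
        Nat.add_sub_cancel] at h1 ⊢
      linarith
    rw [Finset.sum_range_succ']
    have h2 : ∀ d ∈ Finset.range (m+1),
        (-1 : ℚ) ^ (d+1) * ((m+1).choose (d+1) : ℚ) * ((c + (m+1) - (d+1)).choose n : ℚ)
        = -((-1 : ℚ) ^ d * (m.choose d : ℚ) * ((c + m - d).choose n : ℚ))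
          + -((-1 : ℚ) ^ d * (m.choose (d+1) : ℚ) * ((c + m - d).choose n : ℚ)) := by
      intro d _
      have e : c + (m+1) - (d+1) = c + m - d := by omega
      rw [e, Nat.choose_succ_succ, pow_succ]
      push_cast; ring
    rw [Finset.sum_congr rfl h2, Finset.sum_add_distrib, Finset.sum_neg_distrib,
      Finset.sum_neg_distrib, ih n c hm, hT]
    have e1 : c + (m+1) - 0 = c + m + 1 := by omega
    have e2 : n - m = (n - (m+1)) + 1 := by omega
    rw [e1, e2, Nat.choose_succ_succ]
    simp only [pow_zero, Nat.choose_zero_right, Nat.cast_one, one_mul, mul_one]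
    push_cast
    linarith


lemma prod_int_sub (t k : ℕ) :
    ∏ i ∈ Finset.range k, ((t : ℤ) - i) = (t.descFactorial k : ℤ) := by
  induction k with
  | zero => simp
  | succ k ih =>
    rw [Finset.prod_range_succ, ih, Nat.descFactorial_succ]
    rcases le_or_gt (k + 1) t with h | h
    · push_cast [Nat.cast_sub (by omega : k ≤ t)]
      ring
    · rcases Nat.lt_succ_iff_lt_or_eq.mp h with h' | h'
      · rw [Nat.descFactorial_eq_zero_iff_lt.mpr h']; simp
      · subst h'; simp

lemma prod_int_add (t k : ℕ) :
    ∏ j ∈ Finset.range k, ((t : ℤ) + j) = ((t + k - 1).descFactorial k : ℤ) := by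
  rw [Nat.add_descFactorial_eq_ascFactorial']
  induction k with
  | zero => simp
  | succ k ih => rw [Finset.prod_range_succ, ih, Nat.ascFactorial_succ]; push_cast; ring


lemma shape1 (n t : ℕ) : contentProd [n] (t : ℤ) = ((t + n - 1).descFactorial n : ℤ) := by
  simp only [contentProd, List.length_singleton, Finset.prod_range_one, List.getD_cons_zero,
    Nat.cast_zero, sub_zero]
  exact prod_int_add t n

lemma shape2 (n t : ℕ) :
    contentProd (List.replicate n 1) (t : ℤ) = (t.descFactorial n : ℤ) := by
  have h : ∀ i ∈ Finset.range n,
      ∏ j ∈ Finset.range ((List.replicate n 1).getD i 0), ((t:ℤ) + j - i) = (t : ℤ) - i := by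
    intro i hi
    rw [List.getD_eq_getElem _ _ (by simpa using Finset.mem_range.mp hi), List.getElem_replicate]
    simp
  rw [contentProd, List.length_replicate, Finset.prod_congr rfl h, prod_int_sub]

lemma shape3 (n t : ℕ) (hn : 3 ≤ n) :
    contentProd (2 :: List.replicate (n - 2) 1) (t : ℤ) = ((t + 1).descFactorial n : ℤ) := by
  have hlen : (2 :: List.replicate (n - 2) 1).length = (n - 2) + 1 := by simp
  rw [contentProd, hlen, Finset.prod_range_succ']
  have h1 : ∀ i ∈ Finset.range (n - 2),
      ∏ j ∈ Finset.range ((2 :: List.replicate (n - 2) 1).getD (i + 1) 0), ((t:ℤ) + j - (i+1:ℕ))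
        = (t : ℤ) - (i + 1 : ℕ) := by
    intro i hi
    have : (2 :: List.replicate (n - 2) 1).getD (i + 1) 0 = 1 := by
      rw [List.getD_cons_succ, List.getD_eq_getElem _ _ (by simpa using Finset.mem_range.mp hi),
        List.getElem_replicate]
    rw [this]; simp
  rw [Finset.prod_congr rfl h1]
  have h0 : ∏ j ∈ Finset.range ((2 :: List.replicate (n - 2) 1).getD 0 0), ((t:ℤ) + j - (0:ℕ))
      = (t : ℤ) * ((t : ℤ) + 1) := by
    rw [List.getD_cons_zero]
    rw [Finset.prod_range_succ, Finset.prod_range_one]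
    push_cast; ring
  rw [h0]
  have key : (∏ i ∈ Finset.range (n - 2), ((t:ℤ) - (i + 1 : ℕ))) * (t : ℤ)
      = (t.descFactorial (n - 1) : ℤ) := by
    rw [← prod_int_sub t (n - 1), show n - 1 = (n - 2) + 1 by omega, Finset.prod_range_succ']
    push_cast; simp
  calc (∏ i ∈ Finset.range (n - 2), ((t:ℤ) - (i + 1 : ℕ))) * ((t:ℤ) * ((t:ℤ) + 1))
      = ((∏ i ∈ Finset.range (n - 2), ((t:ℤ) - (i + 1 : ℕ))) * (t:ℤ)) * ((t:ℤ) + 1) := by ring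
    _ = (t.descFactorial (n - 1) : ℤ) * ((t:ℤ) + 1) := by rw [key]
    _ = ((t + 1).descFactorial n : ℤ) := by
        rw [show n = (n - 1) + 1 by omega, Nat.succ_descFactorial_succ]
        push_cast; ring

lemma shape4 (n t : ℕ) (hn : 3 ≤ n) :
    contentProd [n - 1, 1] (t : ℤ) = ((t + n - 2).descFactorial n : ℤ) := by
  have hlen : ([n - 1, 1] : List ℕ).length = 2 := by simp
  rw [contentProd, hlen]
  rw [Finset.prod_range_succ, Finset.prod_range_one]
  simp only [List.getD_cons_zero, List.getD_cons_succ, Nat.cast_zero, sub_zero, Nat.cast_one,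
    Finset.prod_range_one]
  rw [prod_int_add t (n - 1)]
  have e : t + (n - 1) - 1 = t + n - 2 := by omega
  rw [e]
  rcases Nat.eq_zero_or_pos t with ht | ht
  · subst ht
    have h1 : (n - 2).descFactorial (n - 1) = 0 :=
      Nat.descFactorial_eq_zero_iff_lt.mpr (by omega)
    have h2 : (0 + n - 2).descFactorial n = 0 :=
      Nat.descFactorial_eq_zero_iff_lt.mpr (by omega)
    rw [show 0 + n - 2 = n - 2 by omega] at h2 ⊢
    rw [h1, h2]; simp
  · have hds : (t + n - 2).descFactorial n = (t - 1) * ((t + n - 2).descFactorial (n - 1)) := by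
      have h := Nat.descFactorial_succ (t + n - 2) (n - 1)
      rw [show (n - 1) + 1 = n by omega, show t + n - 2 - (n - 1) = t - 1 by omega] at h
      exact h
    rw [hds]
    push_cast [Nat.cast_sub (by omega : 1 ≤ t)]
    ring


lemma assembleF (n m c : ℕ) (hm : m ≤ n) (L : List ℕ)
    (hL : ∀ t : ℕ, contentProd L (t : ℤ) = ((t + c).descFactorial n : ℤ)) :
    ((n.factorial : ℚ))⁻¹ *
      ∑ d ∈ Finset.range (m + 1), (-1 : ℚ) ^ d * (m.choose d : ℚ) *
        ((contentProd L ((m : ℤ) - (d : ℤ))) : ℚ)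
      = (c.choose (n - m) : ℚ) := by
  have hterm : ∀ d ∈ Finset.range (m + 1),
      (-1 : ℚ) ^ d * (m.choose d : ℚ) * ((contentProd L ((m : ℤ) - (d : ℤ))) : ℚ)
      = (n.factorial : ℚ) * ((-1 : ℚ) ^ d * (m.choose d : ℚ) * ((c + m - d).choose n : ℚ)) := by
    intro d hd
    have hd' : d ≤ m := by
      have := Finset.mem_range.mp hd; omega
    have e1 : (m : ℤ) - (d : ℤ) = ((m - d : ℕ) : ℤ) := by
      push_cast [Nat.cast_sub hd']; ring
    rw [e1, hL (m - d), Nat.descFactorial_eq_factorial_mul_choose,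
      show m - d + c = c + m - d by omega]
    push_cast
    ring
  rw [Finset.sum_congr rfl hterm, ← Finset.mul_sum, ← mul_assoc,
    inv_mul_cancel₀ (by exact_mod_cast n.factorial_ne_zero), one_mul]
  exact keyA m n c hm

/-- the normalized character sums for `λ = [n]`, `[1^n]`, `[1^{n−2},2]`,
`[1,n−1]`. -/
theorem content_sum_special_shapes (n m : ℕ) (hn : 3 ≤ n) (hm : m ≤ n)
    (F : List ℕ → ℚ)
    (hF : ∀ L : List ℕ, F L = ((n.factorial : ℚ))⁻¹ *
      ∑ d ∈ Finset.range (m + 1), (-1 : ℚ) ^ d * (m.choose d : ℚ) *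
        ((contentProd L ((m : ℤ) - (d : ℤ))) : ℚ)) :
    F [n] = chooseZ (n - 1) ((m : ℤ) - 1) ∧
    F (List.replicate n 1) = (if m = n then 1 else 0) ∧
    F (2 :: List.replicate (n - 2) 1) = chooseZ 1 ((n : ℤ) - m) ∧
    F [n - 1, 1] = chooseZ (n - 2) ((n : ℤ) - m) := by
  refine ⟨?_, ?_, ?_, ?_⟩
  · rw [hF, assembleF n m (n - 1) hm _
      (fun t => by rw [show t + (n - 1) = t + n - 1 by omega]; exact shape1 n t)]
    rcases Nat.eq_zero_or_pos m with h0 | h0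
    · subst h0
      rw [chooseZ, if_neg (by norm_num), Nat.sub_zero,
        Nat.choose_eq_zero_of_lt (by omega), Nat.cast_zero]
    · rw [chooseZ, if_pos (by push_cast; omega)]
      have ht : ((m : ℤ) - 1).toNat = m - 1 := by omega
      rw [ht]
      have hsymm := Nat.choose_symm (show m - 1 ≤ n - 1 by omega)
      rw [show n - 1 - (m - 1) = n - m by omega] at hsymm
      rw [hsymm]
  · rw [hF, assembleF n m 0 hm _
      (fun t => by rw [show t + 0 = t by omega]; exact shape2 n t)]
    by_cases hmn : m = n
    · subst hmn; simp
    · rw [if_neg hmn, Nat.choose_eq_zero_of_lt (by omega), Nat.cast_zero]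
  · rw [hF, assembleF n m 1 hm _ (fun t => shape3 n t hn)]
    rw [chooseZ, if_pos (by push_cast; omega)]
    have ht : ((n : ℤ) - m).toNat = n - m := by omega
    rw [ht]
  · rw [hF, assembleF n m (n - 2) hm _
      (fun t => by rw [show t + (n - 2) = t + n - 2 by omega]; exact shape4 n t hn)]
    rw [chooseZ, if_pos (by push_cast; omega)]
    have ht : ((n : ℤ) - m).toNat = n - m := by omega
    rw [ht]
end

section
/- Let n ≥ 1 and let β = (β_1,…,β_d) be a partition of n. For an integer r, set T_r = Σ_{S ⊆ {1,…,d}} (−1)^{d−|S|} C(β_S, r) (the coefficient of y^r in ∏_{i=1}^d ((1+y)^{β_i} − 1)). Then, as polynomials in x, Σ_{m=1}^{n} Σ_{k=0}^{n−m} (−1)^k · c(m+k, m) · ((m+k)(m+k−1)/(m+k)!) · T_{n−m−k} · x^m = x(x−1) · Σ_{S ⊆ {1,…,d}} (−1)^{d−|S|} binom(x−2+β_S, n−2), where c(N, m) is the signless Stirling number of the first kind. -/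
open Polynomial
open scoped Classical

/-!
Sending a permutation of `Fin (N + 1)` to the image of `0` and the induced permutation of
`Fin N` (`Equiv.Perm.decomposeFin`) either adds a fixed point (image `0`) or inserts `0` into
an existing cycle, so `∑_σ x ^ (number of cycles of σ) = x (x + 1) ⋯ (x + N - 1)`; substituting
`x ↦ -x` makes the signed Stirling numbers the coefficients of the falling factorial `(x)_N`.
Grouping the left side by `N = m + k` thus gives `∑_N N (N - 1) / N! · T_{n-N} · (x)_N`, and
`N (N - 1) / N! · (x)_N = x (x - 1) binom(x - 2, N - 2)`. Expanding `T`, the inner sum over `N`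
is the Chu–Vandermonde convolution
`∑_j C(β_S, n - 2 - j) binom(x - 2, j) = binom(x - 2 + β_S, n - 2)`.
-/

open Equiv Equiv.Perm Finset

namespace Equiv.Perm

variable {α : Type*} [Fintype α] [DecidableEq α]

theorem card_parts_partition_mul_of_isCycle {c g : Perm α} (hc : c.IsCycle) (hcg : Disjoint c g) :
    (c * g).partition.parts.card + #c.support = g.partition.parts.card + 1 := by
  have hsupp := card_union_of_disjoint (disjoint_iff_disjoint_support.mp hcg)
  have hle : #(c.support ∪ g.support) ≤ Fintype.card α := card_le_univ _
  simp only [parts_partition, Multiset.card_add, Multiset.card_replicate, hcg.cycleType_mul,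
    hc.cycleType, Multiset.card_singleton, hcg.support_mul]
  omega

/-- Removing `x` from its cycle either splits `x` off a cycle of length at least `3` as a new
fixed point, or dissolves a transposition into two fixed points. -/
theorem card_parts_partition_swap_mul {f : Perm α} {x : α} (hx : f x ≠ x) :
    (swap x (f x) * f).partition.parts.card = f.partition.parts.card + 1 := by
  set c := f.cycleOf x
  set g := f * c⁻¹
  have hc : c.IsCycle := isCycle_cycleOf f hx
  have hgc : Disjoint g c := disjoint_mul_inv_of_mem_cycleFactorsFinset
    (cycleOf_mem_cycleFactorsFinset_iff.mpr (mem_support.mpr hx))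
  have hcx : c x = f x := cycleOf_apply_self f x
  have hf : c * g = f := by rw [← hgc.commute.eq, inv_mul_cancel_right]
  have hcard := card_parts_partition_mul_of_isCycle hc hgc.symm
  rw [hf] at hcard
  rw [show swap x (f x) * f = swap x (c x) * c * g by rw [hcx, mul_assoc, hf]]
  by_cases hccx : c (c x) = x
  · have htwo : c = swap x (c x) := hc.eq_swap_of_apply_apply_eq_self (hcx ▸ hx) hccx
    rw [htwo, card_support_swap (hcx ▸ hx).symm] at hcard
    have hcc : swap x (c x) * c = 1 := by nth_rw 2 [htwo]; exact swap_mul_self _ _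
    rw [hcc, one_mul]
    omega
  · have hc' : (swap x (c x) * c).IsCycle := hc.swap_mul (hcx ▸ hx) hccx
    have hsupp : (swap x (c x) * c).support = c.support \ {x} := support_swap_mul_eq c x hccx
    have hcard' := card_parts_partition_mul_of_isCycle hc'
      (hgc.symm.mono (hsupp ▸ sdiff_subset) le_rfl)
    rw [hsupp, sdiff_singleton_eq_erase, card_erase_of_mem (mem_support.mpr (hcx ▸ hx))] at hcard'
    have := hc.two_le_card_support
    omega

theorem decomposeFin_symm_zero_eq_extendDomain {n : ℕ} (e : Perm (Fin n)) :
    decomposeFin.symm (0, e) = e.extendDomain (finSuccAboveEquiv 0) := by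
  ext x
  refine Fin.cases ?_ (fun y => ?_) x
  · rw [decomposeFin_symm_apply_zero, extendDomain_apply_not_subtype _ _ (by simp)]
  · have hy : y.succ = finSuccAboveEquiv 0 y := by simp [finSuccAboveEquiv_apply]
    rw [decomposeFin_symm_apply_succ, swap_self, refl_apply, hy, extendDomain_apply_image]
    simp [finSuccAboveEquiv_apply]

theorem decomposeFin_symm_eq_swap_mul {n : ℕ} (p : Fin (n + 1)) (e : Perm (Fin n)) :
    decomposeFin.symm (p, e) = swap 0 p * decomposeFin.symm (0, e) := by
  ext x
  refine Fin.cases ?_ (fun y => ?_) x <;> simp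

end Equiv.Perm

theorem numCycles_eq_card_parts_partition {n : ℕ} (σ : Perm (Fin n)) :
    numCycles σ = σ.partition.parts.card := by
  rw [numCycles, fullCycleType, parts_partition, sum_cycleType, Fintype.card_fin]

theorem numCycles_le {n : ℕ} (σ : Perm (Fin n)) : numCycles σ ≤ n := by
  have := Multiset.card_nsmul_le_sum (a := 1) fun _ hx => σ.partition.parts_pos hx
  simpa [numCycles_eq_card_parts_partition, σ.partition.parts_sum] using this

theorem numCycles_decomposeFin_symm {n : ℕ} (p : Fin (n + 1)) (e : Perm (Fin n)) :
    numCycles (decomposeFin.symm (p, e)) = numCycles e + if p = 0 then 1 else 0 := by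
  have hzero : numCycles (decomposeFin.symm (0, e)) = numCycles e + 1 := by
    have := card_le_univ e.support
    simp only [numCycles_eq_card_parts_partition, decomposeFin_symm_zero_eq_extendDomain,
      parts_partition, Multiset.card_add, Multiset.card_replicate, cycleType_extendDomain,
      card_support_extend_domain, Fintype.card_fin] at this ⊢
    omega
  split_ifs with hp
  · rw [hp, hzero]
  · have hσ0 : decomposeFin.symm (p, e) 0 ≠ 0 := by simpa using hp
    have := card_parts_partition_swap_mul hσ0
    rw [decomposeFin_symm_apply_zero, decomposeFin_symm_eq_swap_mul p e, ← mul_assoc,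
      swap_mul_self, one_mul] at this
    rw [numCycles_eq_card_parts_partition] at hzero
    rw [decomposeFin_symm_eq_swap_mul, numCycles_eq_card_parts_partition]
    omega

theorem stirling1_succ_zero (N : ℕ) : stirling1 (N + 1) 0 = 0 := by
  rw [stirling1, card_eq_zero, filter_eq_empty_iff]
  intro σ _ h
  have := σ.partition.parts_sum
  rw [numCycles_eq_card_parts_partition, Multiset.card_eq_zero] at h
  simp [h] at this

theorem sum_X_pow_numCycles (R : Type*) [CommSemiring R] (N : ℕ) :
    ∑ σ : Perm (Fin N), (X : R[X]) ^ numCycles σ = ascPochhammer R N := by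
  induction N with
  | zero => simp [numCycles_eq_card_parts_partition, parts_partition]
  | succ n ih =>
    have hfiber (e : Perm (Fin n)) :
        ∑ p : Fin (n + 1), (X : R[X]) ^ numCycles (decomposeFin.symm (p, e)) =
          X ^ numCycles e * (X + (n : R[X])) := by
      simp only [numCycles_decomposeFin_symm, Fin.sum_univ_succ, if_pos, Fin.succ_ne_zero,
        if_false, add_zero, pow_succ, sum_const, card_univ, Fintype.card_fin, nsmul_eq_mul]
      ring
    rw [← decomposeFin.symm.sum_comp, Fintype.sum_prod_type_right, Fintype.sum_congr _ _ hfiber,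
      ← sum_mul, ih, ascPochhammer_succ_right]

theorem ascPochhammer_eq_sum_stirling1 (R : Type*) [CommSemiring R] (N : ℕ) :
    ascPochhammer R N = ∑ m ∈ range (N + 1), (stirling1 N m : R) • (X : R[X]) ^ m := by
  rw [← sum_X_pow_numCycles, ← sum_fiberwise_of_maps_to (g := numCycles) (t := range (N + 1))
    fun σ _ => mem_range.mpr (Nat.lt_succ_of_le (numCycles_le σ))]
  refine sum_congr rfl fun m _ => ?_
  rw [sum_congr rfl fun σ hσ => by rw [(mem_filter.mp hσ).2], sum_const, Nat.cast_smul_eq_nsmul,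
    stirling1]

theorem descPochhammer_eq_neg_one_pow_mul_ascPochhammer_comp_neg (R : Type*) [CommRing R]
    (N : ℕ) : descPochhammer R N = (-1) ^ N * (ascPochhammer R N).comp (-X) := by
  induction N with
  | zero => simp
  | succ n ih =>
    rw [descPochhammer_succ_right, ascPochhammer_succ_right, ih, mul_comp, add_comp, X_comp,
      natCast_comp]
    ring

theorem descPochhammer_eq_sum_stirling1 (R : Type*) [CommRing R] (N : ℕ) :
    descPochhammer R N =
      ∑ m ∈ range (N + 1), ((-1 : R) ^ (N - m) * stirling1 N m) • (X : R[X]) ^ m := by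
  rw [descPochhammer_eq_neg_one_pow_mul_ascPochhammer_comp_neg, ascPochhammer_eq_sum_stirling1,
    Polynomial.sum_comp, mul_sum]
  refine sum_congr rfl fun m hm => ?_
  have hsign : C ((-1 : R) ^ (N - m)) = (-1) ^ N * (-1) ^ m := by
    rw [← pow_add, show N + m = N - m + 2 * m by grind, pow_add, pow_mul, neg_one_sq, one_pow,
      mul_one]
    simp
  rw [smul_comp, pow_comp, X_comp, smul_eq_C_mul, smul_eq_C_mul, map_mul, neg_pow (X : R[X]) m,
    hsign]
  ring

theorem sum_Icc_sum_range_stirling1_smul_X_pow {R : Type*} [CommRing R] (a : ℕ → R)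
    (ha : a 0 = 0) (n : ℕ) :
    ∑ m ∈ Icc 1 n, ∑ k ∈ range (n - m + 1),
        ((-1) ^ k * stirling1 (m + k) m * a (m + k)) • (X : R[X]) ^ m =
      ∑ N ∈ range (n + 1), a N • descPochhammer R N := by
  set F : ℕ → ℕ → R[X] := fun m k => ((-1) ^ k * stirling1 (m + k) m * a (m + k)) • X ^ m
  have hF0 : ∑ k ∈ range (n + 1 - 0), F 0 k = 0 :=
    sum_eq_zero fun k _ => by cases k <;> simp [F, ha, stirling1_succ_zero]
  have hrange : range (n + 1) = insert 0 (Icc 1 n) := by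
    ext m
    simp only [mem_range, mem_insert, mem_Icc]
    omega
  calc _ = ∑ m ∈ range (n + 1), ∑ k ∈ range (n + 1 - m), F m k := by
        rw [hrange, sum_insert (by simp), hF0, zero_add]
        exact sum_congr rfl fun m hm => by rw [Nat.sub_add_comm (mem_Icc.mp hm).2]
    _ = ∑ N ∈ range (n + 1), ∑ m ∈ range (N + 1), F m (N - m) := (sum_range_diag_flip _ _).symm
    _ = _ := sum_congr rfl fun N _ => by
        rw [descPochhammer_eq_sum_stirling1, smul_sum]
        refine sum_congr rfl fun m hm => ?_
        obtain ⟨k, rfl⟩ := Nat.exists_eq_add_of_le (Nat.le_of_lt_succ (mem_range.mp hm))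
        simp only [F, Nat.add_sub_cancel_left, smul_smul]
        ring_nf

theorem descPochhammer_comp_eq_smeval (p : ℚ[X]) (k : ℕ) :
    (descPochhammer ℚ k).comp p = (descPochhammer ℤ k).smeval p := by
  rw [comp_eq_aeval, ← descPochhammer_map (algebraMap ℤ ℚ), aeval_map_algebraMap, aeval_eq_smeval]

/-- `ℚ[X]` is a binomial ring through its `ℚ≥0`-module structure. -/
theorem binomPoly_natCast (c : ℤ) (k : ℕ) : binomPoly c k = Ring.choose (X + C (c : ℚ)) k := by
  rw [binomPoly, if_pos (Int.natCast_nonneg k), Int.toNat_natCast, descPochhammer_comp_eq_smeval,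
    Ring.descPochhammer_eq_factorial_smul_choose, ← Nat.cast_smul_eq_nsmul ℚ, inv_smul_smul₀]
  exact_mod_cast k.factorial_ne_zero

theorem binomPoly_of_neg (c : ℤ) {k : ℤ} (hk : k < 0) : binomPoly c k = 0 :=
  if_neg hk.not_ge

theorem binomPoly_add_natCast (c : ℤ) (b M : ℕ) :
    binomPoly (c + b) M = ∑ j ∈ range (M + 1), (b.choose (M - j) : ℚ) • binomPoly c j := by
  rw [binomPoly_natCast,
    show X + C ((c + b : ℤ) : ℚ) = (X + C (c : ℚ)) + (b : ℚ[X]) by simp; ring,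
    Ring.add_choose_eq _ (Commute.all _ _), Nat.sum_antidiagonal_eq_sum_range_succ
      fun i j => Ring.choose (X + C (c : ℚ)) i * Ring.choose (b : ℚ[X]) j]
  refine sum_congr rfl fun j _ => ?_
  rw [binomPoly_natCast, Ring.choose_natCast, smul_eq_C_mul, map_natCast, mul_comm]

theorem sum_choose_smul_binomPoly_sub_two (b n : ℕ) :
    ∑ N ∈ range (n + 1), (b.choose (n - N) : ℚ) • binomPoly (-2) ((N : ℤ) - 2) =
      binomPoly ((b : ℤ) - 2) ((n : ℤ) - 2) := by
  rcases lt_or_ge n 2 with hn | hn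
  · rw [binomPoly_of_neg _ (by omega)]
    exact sum_eq_zero fun N hN => by rw [binomPoly_of_neg _ (by grind), smul_zero]
  obtain ⟨M, rfl⟩ := Nat.exists_eq_add_of_le' hn
  rw [sum_range_succ', sum_range_succ', binomPoly_of_neg _ (by norm_num),
    binomPoly_of_neg _ (by norm_num), smul_zero, smul_zero, add_zero, add_zero,
    show ((M + 2 : ℕ) : ℤ) - 2 = M by push_cast; ring, sub_eq_neg_add, binomPoly_add_natCast]
  refine sum_congr rfl fun j _ => ?_
  rw [show ((j + 1 + 1 : ℕ) : ℤ) - 2 = j by push_cast; ring,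
    show M + 2 - (j + 1 + 1) = M - j by omega]

theorem smul_descPochhammer_eq_X_mul_X_sub_one_mul_binomPoly (N : ℕ) :
    ((N : ℚ) * (N - 1) / N.factorial) • descPochhammer ℚ N =
      X * (X - 1) * binomPoly (-2) ((N : ℤ) - 2) := by
  rcases lt_or_ge N 2 with hN | hN
  · rw [binomPoly_of_neg _ (by omega)]
    interval_cases N <;> simp
  obtain ⟨j, rfl⟩ := Nat.exists_eq_add_of_le' hN
  have hweight :
      ((j + 2 : ℕ) : ℚ) * ((j + 2 : ℕ) - 1) / (j + 2).factorial = (j.factorial : ℚ)⁻¹ := by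
    rw [Nat.factorial_succ, Nat.factorial_succ]
    push_cast
    field_simp
    ring
  have hdesc : descPochhammer ℚ (j + 2) =
      X * (X - 1) * (descPochhammer ℚ j).comp (X + C ((-2 : ℤ) : ℚ)) := by
    rw [add_comm, ← descPochhammer_mul]
    simp [descPochhammer_succ_right, sub_eq_add_neg, C_ofNat]
  rw [show ((j + 2 : ℕ) : ℤ) - 2 = j by push_cast; ring, binomPoly, if_pos (by positivity),
    Int.toNat_natCast, hweight, hdesc, mul_smul_comm]

theorem stirling_binom_gf_weighted_general (n d : ℕ) (β : Fin d → ℕ)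
    (T : ℕ → ℚ)
    (hT : ∀ r, T r = ∑ S : Finset (Fin d), (-1 : ℚ) ^ (d - S.card) *
      (((∑ i ∈ S, β i).choose r : ℕ) : ℚ)) :
    ∑ m ∈ Finset.Icc 1 n, ∑ k ∈ Finset.range (n - m + 1),
        ((-1 : ℚ) ^ k * (stirling1 (m + k) m : ℚ) *
          (((m + k : ℕ) : ℚ) * (((m + k : ℕ) : ℚ) - 1) / (((m + k).factorial : ℚ))) *
          T (n - m - k)) • Polynomial.X ^ m =
      Polynomial.X * (Polynomial.X - 1) *
        ∑ S : Finset (Fin d), ((-1 : ℚ) ^ (d - S.card)) •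
          binomPoly ((∑ i ∈ S, β i : ℤ) - 2) ((n : ℤ) - 2) := by
  set w : ℕ → ℚ := fun N => (N : ℚ) * (N - 1) / N.factorial
  calc _ = ∑ m ∈ Icc 1 n, ∑ k ∈ range (n - m + 1),
        ((-1) ^ k * stirling1 (m + k) m * (T (n - (m + k)) * w (m + k))) • (X : ℚ[X]) ^ m := by
        simp only [w, Nat.sub_sub, mul_assoc, mul_comm (T _)]
    _ = ∑ N ∈ range (n + 1), T (n - N) • (w N • descPochhammer ℚ N) := by
        rw [sum_Icc_sum_range_stirling1_smul_X_pow (fun N => T (n - N) * w N) (by simp [w])]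
        simp only [mul_smul]
    _ = X * (X - 1) * ∑ N ∈ range (n + 1), T (n - N) • binomPoly (-2) ((N : ℤ) - 2) := by
        simp only [w, smul_descPochhammer_eq_X_mul_X_sub_one_mul_binomPoly, mul_sum, mul_smul_comm]
    _ = _ := by
        simp only [hT, sum_smul, mul_smul]
        rw [sum_comm]
        simp only [← smul_sum, sum_choose_smul_binomPoly_sub_two, Nat.cast_sum]

/-- the generating-function identity with weight `(m+k)(m+k−1)` and the
coefficients `T_r` of `∏_i ((1+y)^{β_i} − 1)`. -/
theorem stirling_binom_gf_weighted (n d : ℕ) (hn : 1 ≤ n) (β : Fin d → ℕ)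
    (hβ : ∀ i, 1 ≤ β i) (hsum : ∑ i, β i = n)
    (T : ℕ → ℚ)
    (hT : ∀ r, T r = ∑ S : Finset (Fin d), (-1 : ℚ) ^ (d - S.card) *
      (((∑ i ∈ S, β i).choose r : ℕ) : ℚ)) :
    ∑ m ∈ Finset.Icc 1 n, ∑ k ∈ Finset.range (n - m + 1),
        ((-1 : ℚ) ^ k * (stirling1 (m + k) m : ℚ) *
          (((m + k : ℕ) : ℚ) * (((m + k : ℕ) : ℚ) - 1) / (((m + k).factorial : ℚ))) *
          T (n - m - k)) • Polynomial.X ^ m =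
      Polynomial.X * (Polynomial.X - 1) *
        ∑ S : Finset (Fin d), ((-1 : ℚ) ^ (d - S.card)) •
          binomPoly ((∑ i ∈ S, β i : ℤ) - 2) ((n : ℤ) - 2) :=
  stirling_binom_gf_weighted_general n d β T hT
end
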